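/- Let P be a small additive category, I ⊆ P a full additive subcategory, and d ≥ 1. Let K be the homotopy category of bounded cochain complexes over P, a triangulated category with shift Σ, and identify P and I with the complexes concentrated in degree 0. Set A^{(d+1)} := (P ∗ ΣP ∗ ⋯ ∗ Σ^{d+1}P) ∩ { X : Hom_K(X, Σ^m I) = 0 for all I ∈ I, m ≥ 1 }. Then an object X of K lies in A^{(d+1)} if and only if X is isomorphic in K to a complex ⋯ → 0 → P_{d+1} → P_d → ⋯ → P_1 → P_0 → 0 → ⋯ with each P_i ∈ P placed in cohomological degree −i, such that for every I ∈ I the induced sequence of abelian groups Hom_P(P_0, I) → Hom_P(P_1, I) → ⋯ → Hom_P(P_d, I) → Hom_P(P_{d+1}, I) → 0 is exact. -/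

import Mathlib

/-!
An object of `P ∗ ΣP ∗ ⋯ ∗ ΣⁿP` is, by induction on `n`, the image of a complex concentrated in
degrees `[-n, 0]`: if `X' → X → ΣⁿP → ΣX'` is distinguished and `X'` comes from such a complex `Y'`
in degrees `[1-n, 0]`, rotating the triangle exhibits `X` as the mapping cone of a chain map from
`P` placed in degree `1-n` to `Y'`. Conversely, such a complex `Y` sits in the degreewise split
short exact sequence `σ^{≥1-n} Y → Y → Y^{-n}[n]`, hence in a distinguished triangle.

`Hom_K(Y, Σᵐ J)` is the degree `m` cohomology of the complex `Hom(Y, J)`: maps `Y^{-m} ⟶ J` killed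
by the incoming differential, modulo those factoring through the outgoing one. So `Y` lies in
`ker Ext^{≥1}(-, I)` iff `Hom(Y, J)` is exact in all positive degrees, which for `Y^{-d-2} = 0` is
the exactness of `Hom(P_0, J) → ⋯ → Hom(P_{d+1}, J) → 0`.
-/

open CategoryTheory Limits Pretriangulated

universe v u

namespace AuslanderIyamaStmt7

section Generic

variable {C : Type u} [Category.{v} C] [HasZeroObject C] [HasShift C ℤ] [Preadditive C]
  [∀ n : ℤ, (shiftFunctor C n).Additive] [Pretriangulated C]

/-- `S₁ ∗ S₂`: objects `Y` fitting in a distinguished triangle `X ⟶ Y ⟶ Z ⟶ X⟦1⟧`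
with `X ∈ S₁` and `Z ∈ S₂`. -/
def star (S₁ S₂ : Set C) : Set C :=
  {Y | ∃ (X Z : C) (f : X ⟶ Y) (g : Y ⟶ Z) (h : Z ⟶ X⟦(1 : ℤ)⟧),
    (Triangle.mk f g h ∈ distTriang C) ∧ X ∈ S₁ ∧ Z ∈ S₂}

/-- `Σⁿ S`, closed under isomorphism. -/
def shiftSet (n : ℤ) (S : Set C) : Set C :=
  {X | ∃ Y ∈ S, Nonempty (X ≅ Y⟦n⟧)}

/-- `V n = P ∗ ΣP ∗ ⋯ ∗ Σⁿ P`. -/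
def V (P : Set C) : ℕ → Set C
  | 0 => P
  | n + 1 => star (V P n) (shiftSet ((n : ℤ) + 1) P)

/-- The kernel class `{X : Hom(X, Σ^m I') = 0 for all I' ∈ I, m ≥ 1}`. -/
def extKer (I : Set C) : Set C :=
  {X | ∀ I' ∈ I, ∀ m : ℤ, 1 ≤ m → ∀ f : X ⟶ I'⟦m⟧, f = 0}

end Generic

variable (P : Type u) [SmallCategory P] [Preadditive P] [HasZeroObject P]
  [HasBinaryBiproducts P]

/-- The identification of `P` with the complexes concentrated in degree `0`, regarded
in the homotopy category. -/
noncomputable def emb : P ⥤ HomotopyCategory P (ComplexShape.up ℤ) :=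
  HomologicalComplex.single P (ComplexShape.up ℤ) 0 ⋙
    HomotopyCategory.quotient P (ComplexShape.up ℤ)

/-- The class of objects of the homotopy category isomorphic to an object of `P`
placed in degree `0`. -/
noncomputable def Pclass : Set (HomotopyCategory P (ComplexShape.up ℤ)) :=
  {X | ∃ p : P, Nonempty (X ≅ (emb P).obj p)}

/-- The class of objects of the homotopy category isomorphic to an object of `I`
placed in degree `0`. -/
noncomputable def Iclass (I : Set P) : Set (HomotopyCategory P (ComplexShape.up ℤ)) :=
  {X | ∃ p ∈ I, Nonempty (X ≅ (emb P).obj p)}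

/-- For a cochain complex `Y` over `P` (thought of as `0 → P_{d+1} → ⋯ → P_0 → 0` with
`P_i = Y.X (-i)`), exactness of the induced sequence
`Hom(P_0, I) → Hom(P_1, I) → ⋯ → Hom(P_d, I) → Hom(P_{d+1}, I) → 0`. -/
def homSeqRightExact (d : ℕ) (Y : CochainComplex P ℤ) (I : P) : Prop :=
  (∀ k : ℕ, 1 ≤ k → k ≤ d → ∀ g : Y.X (-(k : ℤ)) ⟶ I,
      Y.d (-(k : ℤ) - 1) (-(k : ℤ)) ≫ g = 0 →
        ∃ h : Y.X (-(k : ℤ) + 1) ⟶ I, Y.d (-(k : ℤ)) (-(k : ℤ) + 1) ≫ h = g) ∧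
    ∀ g : Y.X (-(d : ℤ) - 1) ⟶ I,
      ∃ h : Y.X (-(d : ℤ)) ⟶ I, Y.d (-(d : ℤ) - 1) (-(d : ℤ)) ≫ h = g

section IsoClosure

variable {C : Type u} [Category.{v} C] [HasZeroObject C] [HasShift C ℤ] [Preadditive C]
  [∀ n : ℤ, (shiftFunctor C n).Additive] [Pretriangulated C]

lemma mem_star_of_iso {S₁ S₂ : Set C} {Y Y' : C} (e : Y ≅ Y') (hY : Y ∈ star S₁ S₂) :
    Y' ∈ star S₁ S₂ := by
  obtain ⟨X, Z, f, g, h, hT, hX, hZ⟩ := hY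
  refine ⟨X, Z, f ≫ e.hom, e.inv ≫ g, h, isomorphic_distinguished _ hT _ ?_, hX, hZ⟩
  refine Triangle.isoMk _ _ (Iso.refl _) e.symm (Iso.refl _) ?_ ?_ ?_ <;> simp [Triangle.mk]

omit [HasZeroObject C] [∀ n : ℤ, (shiftFunctor C n).Additive] [Pretriangulated C] in
lemma mem_extKer_of_iso {I : Set C} {X X' : C} (e : X ≅ X') (hX : X ∈ extKer I) :
    X' ∈ extKer I := fun J hJ m hm f => by
  simpa using congrArg (e.inv ≫ ·) (hX J hJ m hm (e.hom ≫ f))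

end IsoClosure

section StupidTruncation

variable {C : Type u} [Category.{v} C] [Preadditive C] [HasZeroObject C]

open HomologicalComplex ZeroObject

noncomputable def stupidTruncGE (Y : CochainComplex C ℤ) (a : ℤ) : CochainComplex C ℤ where
  X i := if a ≤ i then Y.X i else 0
  d i j :=
    if hi : a ≤ i then
      if hj : a ≤ j then eqToHom (if_pos hi) ≫ Y.d i j ≫ eqToHom (if_pos hj).symm else 0
    else 0
  shape i j hij := by
    split_ifs <;> simp [Y.shape i j hij]
  d_comp_d' i j k _ _ := by
    by_cases hi : a ≤ i <;> by_cases hj : a ≤ j <;> by_cases hk : a ≤ k <;> simp [hi, hj, hk]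

variable (Y : CochainComplex C ℤ) (a : ℤ)

lemma isZero_stupidTruncGE_X {i : ℤ} (hi : i < a) : IsZero ((stupidTruncGE Y a).X i) := by
  simpa [stupidTruncGE, not_le.2 hi] using isZero_zero C

instance : (stupidTruncGE Y a).IsStrictlyGE a :=
  (CochainComplex.isStrictlyGE_iff _ _).2 fun _ hi => isZero_stupidTruncGE_X Y a hi

instance (b : ℤ) [Y.IsStrictlyLE b] : (stupidTruncGE Y a).IsStrictlyLE b := by
  refine (CochainComplex.isStrictlyLE_iff _ _).2 fun i hi => ?_
  by_cases h : a ≤ i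
  · simpa [stupidTruncGE, h] using Y.isZero_of_isStrictlyLE b i hi
  · exact isZero_stupidTruncGE_X Y a (not_le.1 h)

noncomputable def ιStupidTruncGE : stupidTruncGE Y a ⟶ Y where
  f i := if hi : a ≤ i then eqToHom (if_pos hi) else 0
  comm' i j (hij : i + 1 = j) := by
    by_cases hi : a ≤ i
    · simp [stupidTruncGE, hi, show a ≤ j by omega]
    · exact (isZero_stupidTruncGE_X Y a (not_le.1 hi)).eq_of_src _ _

lemma isIso_ιStupidTruncGE_f {i : ℤ} (hi : a ≤ i) : IsIso ((ιStupidTruncGE Y a).f i) := by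
  dsimp only [ιStupidTruncGE]
  rw [dif_pos hi]
  exact (eqToIso (if_pos hi)).isIso_hom

variable [Y.IsStrictlyGE (a - 1)]

noncomputable def stupidTruncGEShortComplex : ShortComplex (CochainComplex C ℤ) :=
  ShortComplex.mk (ιStupidTruncGE Y a)
    (mkHomToSingle (𝟙 (Y.X (a - 1))) fun i hi =>
      (Y.isZero_of_isStrictlyGE (a - 1) i (by simp at hi; omega)).eq_of_src _ _)
    (HomologicalComplex.hom_ext _ _ fun i => by
      by_cases hi : a ≤ i
      · exact (isZero_single_obj_X _ (a - 1) _ i (by omega)).eq_of_tgt _ _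
      · exact (isZero_stupidTruncGE_X Y a (not_le.1 hi)).eq_of_src _ _)

lemma isIso_stupidTruncGEShortComplex_g_f {i : ℤ} (hi : i < a) :
    IsIso ((stupidTruncGEShortComplex Y a).g.f i) := by
  obtain rfl | hi' := eq_or_ne i (a - 1)
  · dsimp [stupidTruncGEShortComplex]
    rw [mkHomToSingle_f]
    infer_instance
  · exact isIso_of_source_target_iso_zero _
      (Y.isZero_of_isStrictlyGE (a - 1) i (by omega)).isoZero
      (isZero_single_obj_X _ _ _ i hi').isoZero

noncomputable def stupidTruncGEShortComplexSplitting (i : ℤ) :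
    ((stupidTruncGEShortComplex Y a).map (eval C _ i)).Splitting :=
  if hi : a ≤ i then
    ShortComplex.Splitting.ofIsIsoOfIsZero _ (isIso_ιStupidTruncGE_f Y a hi)
      (isZero_single_obj_X (ComplexShape.up ℤ) (a - 1) _ i (by omega))
  else
    ShortComplex.Splitting.ofIsZeroOfIsIso _ (isZero_stupidTruncGE_X Y a (not_le.1 hi))
      (isIso_stupidTruncGEShortComplex_g_f Y a (not_le.1 hi))

variable [HasBinaryBiproducts C]

lemma quotient_obj_mem_star_of_stupidTruncGE
    {S₁ S₂ : Set (HomotopyCategory C (ComplexShape.up ℤ))}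
    (h₁ : (HomotopyCategory.quotient C _).obj (stupidTruncGE Y a) ∈ S₁)
    (h₂ : (HomotopyCategory.singleFunctor C (a - 1)).obj (Y.X (a - 1)) ∈ S₂) :
    (HomotopyCategory.quotient C _).obj Y ∈ star S₁ S₂ :=
  let T := CochainComplex.trianglehOfDegreewiseSplit _ (stupidTruncGEShortComplexSplitting Y a)
  ⟨_, _, T.mor₁, T.mor₂, T.mor₃,
    (HomotopyCategory.distinguished_iff_iso_trianglehOfDegreewiseSplit _).2 ⟨_, _, ⟨Iso.refl _⟩⟩,
    h₁, h₂⟩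

end StupidTruncation

section MappingCone

variable {C : Type u} [Category.{v} C] [Preadditive C] [HasBinaryBiproducts C]
  {K L : CochainComplex C ℤ} (φ : K ⟶ L)

open CochainComplex

lemma isStrictlyGE_mappingCone (a : ℤ) [K.IsStrictlyGE (a + 1)] [L.IsStrictlyGE a] :
    (mappingCone φ).IsStrictlyGE a :=
  (isStrictlyGE_iff _ _).2 fun i hi => (mappingCone.isZero_X_iff φ i).2
    ⟨K.isZero_of_isStrictlyGE (a + 1) _, L.isZero_of_isStrictlyGE a i⟩

lemma isStrictlyLE_mappingCone (b : ℤ) [K.IsStrictlyLE (b + 1)] [L.IsStrictlyLE b] :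
    (mappingCone φ).IsStrictlyLE b :=
  (isStrictlyLE_iff _ _).2 fun i hi => (mappingCone.isZero_X_iff φ i).2
    ⟨K.isZero_of_isStrictlyLE (b + 1) _, L.isZero_of_isStrictlyLE b i⟩

lemma exists_iso_quotient_obj_mappingCone [HasZeroObject C]
    {A X Z : HomotopyCategory C (ComplexShape.up ℤ)} {f : A ⟶ X} {g : X ⟶ Z} {h : Z ⟶ A⟦(1 : ℤ)⟧}
    (hT : Triangle.mk f g h ∈ distTriang _)
    (eK : (HomotopyCategory.quotient C _).obj K ≅ Z⟦(-1 : ℤ)⟧)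
    (eL : (HomotopyCategory.quotient C _).obj L ≅ A) :
    ∃ ψ : K ⟶ L, Nonempty (X ≅ (HomotopyCategory.quotient C _).obj (mappingCone ψ)) := by
  let T := (Triangle.mk f g h).invRotate
  let u : Z⟦(-1 : ℤ)⟧ ⟶ A := T.mor₁
  let ψ := (HomotopyCategory.quotient C _).preimage (eK.hom ≫ u ≫ eL.inv)
  have comm : (mappingCone.triangleh ψ).mor₁ ≫ eL.hom = eK.hom ≫ T.mor₁ := by
    change (HomotopyCategory.quotient C _).map ψ ≫ eL.hom = eK.hom ≫ u
    simp [ψ]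
  exact ⟨ψ, ⟨(Triangle.π₃.mapIso (isoTriangleOfIso₁₂ _ T
    (HomotopyCategory.mappingCone_triangleh_distinguished ψ) (inv_rot_of_distTriang _ hT)
    eK eL comm)).symm⟩⟩

end MappingCone

section HomToSingle

variable {C : Type u} [Category.{v} C] [Preadditive C] [HasZeroObject C]

/-- Exactness of `Hom(Y^{p''}, J) → Hom(Y^p, J) → Hom(Y^{p'}, J)`. -/
def HomExactAt (Y : CochainComplex C ℤ) (J : C) (p' p p'' : ℤ) : Prop :=
  ∀ f : Y.X p ⟶ J, Y.d p' p ≫ f = 0 → ∃ g : Y.X p'' ⟶ J, Y.d p p'' ≫ g = f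

open CochainComplex HomComplex in
lemma subsingleton_hom_quotient_shift_single_iff (Y : CochainComplex C ℤ) (J : C)
    {p q n : ℤ} (h : p + n = q) (p' p'' : ℤ) (hp' : p' + 1 = p) (hp'' : p + 1 = p'') :
    Subsingleton ((HomotopyCategory.quotient C _).obj Y ⟶
        (HomotopyCategory.quotient C _).obj (((singleFunctor C q).obj J)⟦n⟧)) ↔
      HomExactAt Y J p' p p'' := by
  rw [← CohomologyClass.homAddEquiv.toEquiv.subsingleton_congr]
  constructor
  · intro _ f hf
    rw [← Cocycle.toSingleMk_mem_coboundaries_iff f h p' hp' hf p'' hp'',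
      ← CohomologyClass.mk_eq_zero_iff]
    exact Subsingleton.elim _ _
  · refine fun hY => subsingleton_of_forall_eq 0 fun x => ?_
    obtain ⟨α, rfl⟩ := x.mk_surjective
    obtain ⟨f, hf, rfl⟩ := Cocycle.toSingleMk_surjective α p h p' hp'
    rw [CohomologyClass.mk_eq_zero_iff,
      Cocycle.toSingleMk_mem_coboundaries_iff f h p' hp' hf p'' hp'']
    exact hY f hf

lemma forall_hom_shift_eq_zero_iff_homExactAt (Y : CochainComplex C ℤ)
    {I' : HomotopyCategory C (ComplexShape.up ℤ)} {J : C}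
    (e : I' ≅ (HomotopyCategory.singleFunctor C 0).obj J)
    {p m : ℤ} (h : p + m = 0) (p' p'' : ℤ) (hp' : p' + 1 = p) (hp'' : p + 1 = p'') :
    (∀ f : (HomotopyCategory.quotient C _).obj Y ⟶ I'⟦m⟧, f = 0) ↔ HomExactAt Y J p' p p'' := by
  rw [← subsingleton_iff_forall_eq 0, (Iso.homCongr (Iso.refl _)
    ((shiftFunctor _ m).mapIso e ≪≫
      ((HomotopyCategory.quotient C _).commShiftIso m).symm.app _)).subsingleton_congr]
  exact subsingleton_hom_quotient_shift_single_iff Y J h p' p'' hp' hp''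

end HomToSingle

lemma forall_isZero_X_iff {C : Type u} [Category.{v} C] [Preadditive C]
    (Y : CochainComplex C ℤ) (a b : ℤ) :
    (∀ i, (i < a ∨ b < i) → IsZero (Y.X i)) ↔ Y.IsStrictlyGE a ∧ Y.IsStrictlyLE b := by
  rw [CochainComplex.isStrictlyGE_iff, CochainComplex.isStrictlyLE_iff]
  exact ⟨fun h => ⟨fun i hi => h i (Or.inl hi), fun i hi => h i (Or.inr hi)⟩,
    fun h i hi => hi.elim (fun hi => h.1 i hi) (h.2 i)⟩

variable {P}

open HomologicalComplex

omit [HasBinaryBiproducts P] in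
lemma singleFunctor_obj_mem_shiftSet_Pclass (J : P) {m b : ℤ} (h : m + b = 0) :
    (HomotopyCategory.singleFunctor P b).obj J ∈ shiftSet m (Pclass P) :=
  ⟨(emb P).obj J, ⟨J, ⟨Iso.refl _⟩⟩,
    ⟨(((HomotopyCategory.singleFunctors P).shiftIso m b 0 h).app J).symm⟩⟩

omit [HasBinaryBiproducts P] in
lemma exists_singleFunctor_obj_iso_shift_of_mem_shiftSet_Pclass
    {Z : HomotopyCategory P (ComplexShape.up ℤ)} {m b : ℤ} (h : m + b = 1)
    (hZ : Z ∈ shiftSet m (Pclass P)) :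
    ∃ J : P, Nonempty ((HomotopyCategory.singleFunctor P b).obj J ≅ Z⟦(-1 : ℤ)⟧) := by
  obtain ⟨W, ⟨J, ⟨eW⟩⟩, ⟨eZ⟩⟩ := hZ
  exact ⟨J, ⟨(((HomotopyCategory.singleFunctors P).shiftIso (-1) b (b - 1) (by ring)).app J).symm ≪≫
    (shiftFunctor _ (-1)).mapIso
      ((((HomotopyCategory.singleFunctors P).shiftIso m (b - 1) 0 (by omega)).app J).symm ≪≫
        (shiftFunctor _ m).mapIso eW.symm ≪≫ eZ.symm)⟩⟩

lemma quotient_obj_mem_V (n : ℕ) (Y : CochainComplex P ℤ) [Y.IsStrictlyGE (-n)]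
    [Y.IsStrictlyLE 0] : (HomotopyCategory.quotient P _).obj Y ∈ V (Pclass P) n := by
  induction n generalizing Y with
  | zero =>
    have : Y.IsStrictlyGE 0 := by simpa using ‹Y.IsStrictlyGE _›
    obtain ⟨J, ⟨e⟩⟩ := Y.exists_iso_single 0
    exact ⟨J, ⟨(HomotopyCategory.quotient P _).mapIso e⟩⟩
  | succ n ih =>
    have : Y.IsStrictlyGE (-n - 1) := by
      rw [show -(n : ℤ) - 1 = -↑(n + 1) by push_cast; ring]
      infer_instance
    exact quotient_obj_mem_star_of_stupidTruncGE Y (-n) (ih _)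
      (singleFunctor_obj_mem_shiftSet_Pclass _ (by ring))

lemma exists_iso_quotient_obj_of_mem_V (n : ℕ) {X : HomotopyCategory P (ComplexShape.up ℤ)}
    (hX : X ∈ V (Pclass P) n) :
    ∃ Y : CochainComplex P ℤ, Y.IsStrictlyGE (-n) ∧ Y.IsStrictlyLE 0 ∧
      Nonempty (X ≅ (HomotopyCategory.quotient P _).obj Y) := by
  induction n generalizing X with
  | zero =>
    obtain ⟨J, ⟨e⟩⟩ := hX
    exact ⟨(single P _ 0).obj J, by rw [Nat.cast_zero, neg_zero]; infer_instance, inferInstance,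
      ⟨e⟩⟩
  | succ n ih =>
    obtain ⟨A, Z, f, g, h, hT, hA, hZ⟩ := hX
    obtain ⟨L, _, _, ⟨eL⟩⟩ := ih hA
    obtain ⟨J, ⟨eK⟩⟩ := exists_singleFunctor_obj_iso_shift_of_mem_shiftSet_Pclass
      (b := -(n : ℤ)) (by ring) hZ
    obtain ⟨ψ, ⟨e⟩⟩ := exists_iso_quotient_obj_mappingCone
      (K := (CochainComplex.singleFunctor P (-(n : ℤ))).obj J) hT eK eL.symm
    have : ((CochainComplex.singleFunctor P (-(n : ℤ))).obj J).IsStrictlyGE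
        (-((n + 1 : ℕ) : ℤ) + 1) := by
      rw [show -((n + 1 : ℕ) : ℤ) + 1 = -(n : ℤ) by push_cast; ring]
      infer_instance
    have := ((CochainComplex.singleFunctor P (-(n : ℤ))).obj J).isStrictlyLE_of_le _ (0 + 1)
      (show -(n : ℤ) ≤ 0 + 1 by omega)
    have := L.isStrictlyGE_of_ge (-((n + 1 : ℕ) : ℤ)) (-(n : ℤ)) (by omega)
    exact ⟨_, isStrictlyGE_mappingCone ψ _, isStrictlyLE_mappingCone ψ 0, ⟨e⟩⟩

omit [HasBinaryBiproducts P] in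
lemma mem_extKer_Iclass_iff (I : Set P) (Y : CochainComplex P ℤ) :
    (HomotopyCategory.quotient P _).obj Y ∈ extKer (Iclass P I) ↔
      ∀ J ∈ I, ∀ p' p p'' : ℤ, p' + 1 = p → p + 1 = p'' → p < 0 → HomExactAt Y J p' p p'' := by
  constructor
  · intro hY J hJ p' p p'' hp' hp'' hp
    exact (forall_hom_shift_eq_zero_iff_homExactAt Y (Iso.refl _) (add_neg_cancel p) p' p'' hp'
      hp'').1 (hY _ ⟨J, hJ, ⟨Iso.refl _⟩⟩ (-p) (by omega))
  · rintro hY I' ⟨J, hJ, ⟨e⟩⟩ m hm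
    exact (forall_hom_shift_eq_zero_iff_homExactAt Y e (neg_add_cancel m) (-m - 1) (-m + 1)
      (by omega) rfl).2 (hY J hJ _ _ _ (by omega) rfl (by omega))

omit [HasZeroObject P] [HasBinaryBiproducts P] in
lemma homSeqRightExact_iff (d : ℕ) (Y : CochainComplex P ℤ) [Y.IsStrictlyGE (-d - 1)] (J : P) :
    homSeqRightExact P d Y J ↔
      ∀ p' p p'' : ℤ, p' + 1 = p → p + 1 = p'' → p < 0 → HomExactAt Y J p' p p'' := by
  constructor
  · rintro ⟨hmid, hlast⟩ p' p p'' hp' hp'' hp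
    obtain hp₁ | rfl | hp₁ := lt_trichotomy p (-d - 1)
    · exact fun f _ => ⟨0, (Y.isZero_of_isStrictlyGE _ p hp₁).eq_of_src _ _⟩
    · obtain rfl : p'' = -d := by omega
      exact fun f _ => hlast f
    · obtain ⟨k, rfl⟩ : ∃ k : ℕ, p = -k := ⟨(-p).toNat, by omega⟩
      obtain rfl : p' = -k - 1 := by omega
      obtain rfl : p'' = -k + 1 := by omega
      exact hmid k (by omega) (by omega)
  · intro h
    refine ⟨fun k hk₁ _ => h _ _ _ (by omega) rfl (by omega), fun f => ?_⟩
    exact h (-d - 1 - 1) _ _ (by omega) (by omega) (by omega) f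
      ((Y.isZero_of_isStrictlyGE (-d - 1) _).eq_of_src _ _)

theorem statement7_general (d : ℕ) (I : Set P)
    (X : HomotopyCategory P (ComplexShape.up ℤ)) :
    X ∈ V (Pclass P) (d + 1) ∩ extKer (Iclass P I) ↔
      ∃ Y : CochainComplex P ℤ,
        (∀ i : ℤ, (i < -(d : ℤ) - 1 ∨ 0 < i) → IsZero (Y.X i)) ∧
        (∀ Iobj ∈ I, homSeqRightExact P d Y Iobj) ∧
        Nonempty (X ≅ (HomotopyCategory.quotient P (ComplexShape.up ℤ)).obj Y) := by
  have hd : -((d + 1 : ℕ) : ℤ) = -d - 1 := by push_cast; ring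
  constructor
  · rintro ⟨hV, hK⟩
    obtain ⟨Y, hGE, hLE, ⟨e⟩⟩ := exists_iso_quotient_obj_of_mem_V (d + 1) hV
    rw [hd] at hGE
    refine ⟨Y, (forall_isZero_X_iff Y _ _).2 ⟨hGE, hLE⟩, fun J hJ => ?_, ⟨e⟩⟩
    exact (homSeqRightExact_iff d Y J).2
      ((mem_extKer_Iclass_iff I Y).1 (mem_extKer_of_iso e hK) J hJ)
  · rintro ⟨Y, hY, hseq, ⟨e⟩⟩
    obtain ⟨hGE, hLE⟩ := (forall_isZero_X_iff Y _ _).1 hY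
    have : Y.IsStrictlyGE (-((d + 1 : ℕ) : ℤ)) := hd ▸ hGE
    exact ⟨mem_star_of_iso e.symm (quotient_obj_mem_V (d + 1) Y),
      mem_extKer_of_iso e.symm ((mem_extKer_Iclass_iff I Y).2
        fun J hJ => (homSeqRightExact_iff d Y J).1 (hseq J hJ))⟩

theorem statement7 (d : ℕ) (hd : 1 ≤ d) (I : Set P)
    (hIiso : ∀ ⦃X Y : P⦄, (X ≅ Y) → X ∈ I → Y ∈ I)
    (hIsum : ∀ ⦃X Y : P⦄, X ∈ I → Y ∈ I → (X ⊞ Y) ∈ I)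
    (hIzero : ∀ ⦃X : P⦄, IsZero X → X ∈ I)
    (X : HomotopyCategory P (ComplexShape.up ℤ)) :
    X ∈ V (Pclass P) (d + 1) ∩ extKer (Iclass P I) ↔
      ∃ Y : CochainComplex P ℤ,
        (∀ i : ℤ, (i < -(d : ℤ) - 1 ∨ 0 < i) → IsZero (Y.X i)) ∧
        (∀ Iobj ∈ I, homSeqRightExact P d Y Iobj) ∧
        Nonempty (X ≅ (HomotopyCategory.quotient P (ComplexShape.up ℤ)).obj Y) :=
  statement7_general d I X

end AuslanderIyamaStmt7
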